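/- arXiv:2406.16541 — 6 statements merged into one kernel-verified Lean document; each statement's English description precedes it below -/
import Mathlib

section
/- Let T₁, T₂ be commuting bounded left-invertible operators on a Hilbert space H, with L₁ = (T₁*T₁)⁻¹T₁*. Then L₁T₂ = T₂L₁ if and only if ker T₁* is a reducing subspace for T₂ (i.e., ker T₁* is invariant under both T₂ and T₂*). -/
open ContinuousLinearMap

/-!
Write `L = S A` with `A = T₁*`, so that `S` inverts `A T₁ = T₁*T₁`. The argument is pure algebra:
`L T₁ = 1`, and `A (1 - T₁ L) = 0`, so every `x` splits as `T₁ (L x) + y` with `y ∈ ker A`.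
On the first summand `L T₂` and `T₂ L` agree because `T₂` commutes with `T₁`; on `ker A` the map
`T₂ L` vanishes, and `L T₂` vanishes exactly when `T₂` preserves `ker A`. Invariance of `ker T₁*`
under `T₂*` is automatic, since `T₂*` commutes with `T₁*`.
-/

section LeftInverse

variable {R M : Type*} [Ring R] [AddCommGroup M] [Module R M] [TopologicalSpace M]

theorem mem_ker_of_comp_comm {f g : M →L[R] M} (hfg : f ∘L g = g ∘L f) {x : M}
    (hx : x ∈ LinearMap.ker (f : M →ₗ[R] M)) : g x ∈ LinearMap.ker (f : M →ₗ[R] M) := by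
  simp only [LinearMap.mem_ker, coe_coe] at hx ⊢
  rw [← comp_apply, hfg, comp_apply, hx, map_zero]

variable {T₁ T₂ A S : M →L[R] M}

theorem sub_apply_leftInverse_mem_ker (hS : (A ∘L T₁) ∘L S = 1) (x : M) :
    x - T₁ (S (A x)) ∈ LinearMap.ker (A : M →ₗ[R] M) := by
  have hAx : A (T₁ (S (A x))) = A x := congrArg (· (A x)) hS
  simp [hAx]

theorem mem_ker_of_leftInverse_comp_comm (hS : (A ∘L T₁) ∘L S = 1)
    (hL : (S ∘L A) ∘L T₂ = T₂ ∘L (S ∘L A)) {x : M} (hx : x ∈ LinearMap.ker (A : M →ₗ[R] M)) :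
    T₂ x ∈ LinearMap.ker (A : M →ₗ[R] M) := by
  rw [LinearMap.mem_ker, coe_coe] at hx ⊢
  have hSAT₂x : S (A (T₂ x)) = 0 := by simpa [hx] using congrArg (· x) hL
  calc A (T₂ x) = A (T₁ (S (A (T₂ x)))) := (congrArg (· (A (T₂ x))) hS).symm
    _ = 0 := by rw [hSAT₂x, map_zero, map_zero]

theorem leftInverse_comp_comm_of_mem_ker (hcomm : T₁ ∘L T₂ = T₂ ∘L T₁)
    (hS₁ : S ∘L (A ∘L T₁) = 1) (hS₂ : (A ∘L T₁) ∘L S = 1)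
    (hker : ∀ x ∈ LinearMap.ker (A : M →ₗ[R] M), T₂ x ∈ LinearMap.ker (A : M →ₗ[R] M)) :
    (S ∘L A) ∘L T₂ = T₂ ∘L (S ∘L A) := by
  have hLT₁ : ∀ a, S (A (T₁ a)) = a := fun a => congrArg (· a) hS₁
  have hT₂T₁ : ∀ a, T₂ (T₁ a) = T₁ (T₂ a) := fun a => (congrArg (· a) hcomm).symm
  ext x
  obtain ⟨a, y, hy, rfl⟩ : ∃ a y, A y = 0 ∧ x = T₁ a + y :=
    ⟨_, _, sub_apply_leftInverse_mem_ker hS₂ x, (add_sub_cancel _ _).symm⟩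
  have hT₂y : A (T₂ y) = 0 := hker y hy
  simp only [comp_apply, map_add, hy, hT₂y, hT₂T₁, hLT₁, map_zero, add_zero]

end LeftInverse

theorem stmt_1_general {H : Type*} [NormedAddCommGroup H] [InnerProductSpace ℂ H] [CompleteSpace H]
    (T₁ T₂ S : H →L[ℂ] H)
    (hcomm : T₁ ∘L T₂ = T₂ ∘L T₁)
    (hS₁ : S ∘L (adjoint T₁ ∘L T₁) = 1) (hS₂ : (adjoint T₁ ∘L T₁) ∘L S = 1) :
    (S ∘L adjoint T₁) ∘L T₂ = T₂ ∘L (S ∘L adjoint T₁) ↔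
      ((∀ x ∈ LinearMap.ker (adjoint T₁ : H →ₗ[ℂ] H), T₂ x ∈ LinearMap.ker (adjoint T₁ : H →ₗ[ℂ] H)) ∧
       (∀ x ∈ LinearMap.ker (adjoint T₁ : H →ₗ[ℂ] H), adjoint T₂ x ∈ LinearMap.ker (adjoint T₁ : H →ₗ[ℂ] H))) := by
  have hadj : adjoint T₁ ∘L adjoint T₂ = adjoint T₂ ∘L adjoint T₁ := by
    rw [← adjoint_comp, ← adjoint_comp, hcomm]
  refine ⟨fun hL => ⟨fun x hx => ?_, fun x hx => mem_ker_of_comp_comm hadj hx⟩,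
    fun h => leftInverse_comp_comm_of_mem_ker hcomm hS₁ hS₂ h.1⟩
  exact mem_ker_of_leftInverse_comp_comm hS₂ hL hx

/-- For commuting bounded-below operators `T₁, T₂` on a Hilbert space,
with `L₁ = (T₁*T₁)⁻¹T₁*` (encoded via an inverse `S` of `T₁*T₁`), one has
`L₁T₂ = T₂L₁` iff `ker T₁*` is a reducing subspace for `T₂`. -/
theorem stmt_1 {H : Type*} [NormedAddCommGroup H] [InnerProductSpace ℂ H] [CompleteSpace H]
    (T₁ T₂ S : H →L[ℂ] H)
    (hcomm : T₁ ∘L T₂ = T₂ ∘L T₁)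
    (c₁ c₂ : ℝ) (hc₁ : 0 < c₁) (hc₂ : 0 < c₂)
    (hT₁ : ∀ h : H, c₁ * ‖h‖ ≤ ‖T₁ h‖) (hT₂ : ∀ h : H, c₂ * ‖h‖ ≤ ‖T₂ h‖)
    (hS₁ : S ∘L (adjoint T₁ ∘L T₁) = 1) (hS₂ : (adjoint T₁ ∘L T₁) ∘L S = 1) :
    (S ∘L adjoint T₁) ∘L T₂ = T₂ ∘L (S ∘L adjoint T₁) ↔
      ((∀ x ∈ LinearMap.ker (adjoint T₁ : H →ₗ[ℂ] H), T₂ x ∈ LinearMap.ker (adjoint T₁ : H →ₗ[ℂ] H)) ∧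
       (∀ x ∈ LinearMap.ker (adjoint T₁ : H →ₗ[ℂ] H), adjoint T₂ x ∈ LinearMap.ker (adjoint T₁ : H →ₗ[ℂ] H))) :=
  stmt_1_general T₁ T₂ S hcomm hS₁ hS₂
end

section
/- Let (T₁, …, Tₙ) be a left-inverse commuting tuple of bounded left-invertible operators on a Hilbert space H such that each Tᵢ is analytic, i.e., ⋂_{k≥0} Tᵢᵏ H = {0}. Then the joint kernel ⋂_{i=1}^n ker Tᵢ* is a nonzero closed subspace of H (provided H ≠ {0}). -/
/-!
Induct on the set `S` of indices. The joint kernel `E = ⋂_{i ∈ S} ker Tᵢ*` is closed and, for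
`j ∉ S`, invariant under `Tⱼ*` (the adjoints commute) and under `Tⱼ` (as `ker Tᵢ* = ker Lᵢ` and
`Lᵢ` commutes with `Tⱼ`). If `ker Tⱼ*` met `E` only in `0`, then, `Tⱼ E` being closed,
`E = Tⱼ E ⊕ (E ⊖ Tⱼ E)` with `E ⊖ Tⱼ E ⊆ ker Tⱼ* ∩ E = 0`; so `Tⱼ E = E`, and hence
`E ⊆ ⋂ₖ Tⱼᵏ H = 0` by analyticity.
-/

open ContinuousLinearMap

namespace Submodule

variable {R M : Type*} [Semiring R] [AddCommMonoid M] [Module R M]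

theorem le_map_pow_of_le_map {f : Module.End R M} {E : Submodule R M} (hE : E ≤ E.map f) :
    ∀ k : ℕ, E ≤ E.map (f ^ k)
  | 0 => by rw [pow_zero, Module.End.one_eq_id, map_id]
  | k + 1 => by
    rw [pow_succ', Module.End.mul_eq_comp, map_comp]
    exact hE.trans (map_mono (le_map_pow_of_le_map hE k))

theorem eq_bot_of_le_map_of_iInf_range_pow_eq_bot {f : Module.End R M} {E : Submodule R M}
    (hE : E ≤ E.map f) (hf : ⨅ k : ℕ, LinearMap.range (f ^ k) = ⊥) : E = ⊥ :=
  eq_bot_iff.mpr <| hf ▸ le_iInf fun k => (le_map_pow_of_le_map hE k).trans LinearMap.map_le_range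

end Submodule

theorem ContinuousLinearMap.ker_le_comap_ker_of_comp_comm {R M : Type*} [Semiring R]
    [TopologicalSpace M] [AddCommMonoid M] [Module R M] {f g : M →L[R] M} (h : f ∘L g = g ∘L f) :
    LinearMap.ker (f : M →ₗ[R] M) ≤ (LinearMap.ker (f : M →ₗ[R] M)).comap (g : M →ₗ[R] M) :=
  fun x hx => by
    simp only [Submodule.mem_comap, LinearMap.mem_ker, coe_coe] at hx ⊢
    rw [← comp_apply, h, comp_apply, hx, map_zero]

theorem ContinuousLinearMap.antilipschitz_of_mul_norm_le {𝕜 E F : Type*}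
    [NontriviallyNormedField 𝕜] [SeminormedAddCommGroup E] [SeminormedAddCommGroup F]
    [NormedSpace 𝕜 E] [NormedSpace 𝕜 F] {T : E →L[𝕜] F} {c : ℝ} (hc : 0 < c)
    (hT : ∀ x, c * ‖x‖ ≤ ‖T x‖) : AntilipschitzWith (Real.toNNReal c⁻¹) T :=
  T.antilipschitz_of_bound fun x => by
    rw [Real.coe_toNNReal _ (inv_nonneg.mpr hc.le), inv_mul_eq_div, le_div_iff₀' hc]
    exact hT x

theorem ContinuousLinearMap.isClosed_map_of_antilipschitz {𝕜 E F : Type*}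
    [NontriviallyNormedField 𝕜] [NormedAddCommGroup E] [NormedAddCommGroup F] [NormedSpace 𝕜 E]
    [NormedSpace 𝕜 F] [CompleteSpace E] {T : E →L[𝕜] F} {K : NNReal} (hT : AntilipschitzWith K T)
    {V : Submodule 𝕜 E} (hV : IsClosed (V : Set E)) :
    IsClosed (V.map (T : E →ₗ[𝕜] F) : Set F) :=
  (hT.isClosedEmbedding T.uniformContinuous).isClosedMap _ hV

section HilbertSpace

variable {𝕜 H : Type*} [RCLike 𝕜] [NormedAddCommGroup H] [InnerProductSpace 𝕜 H]
  [CompleteSpace H]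

/-- An element of `E` orthogonal to `T E` is sent by `T†` into `E ⊓ Eᗮ = ⊥`. -/
theorem orthogonal_map_inf_le_ker_adjoint {T : H →L[𝕜] H} {E : Submodule 𝕜 H}
    (hE : E.map (adjoint T : H →ₗ[𝕜] H) ≤ E) :
    (E.map (T : H →ₗ[𝕜] H))ᗮ ⊓ E ≤ LinearMap.ker (adjoint T : H →ₗ[𝕜] H) := by
  rintro x ⟨hxT, hxE⟩
  have h_mem : adjoint T x ∈ E := hE (Submodule.mem_map_of_mem hxE)
  have h_orth : adjoint T x ∈ Eᗮ := fun u hu => by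
    rw [adjoint_inner_right]
    exact Submodule.inner_right_of_mem_orthogonal (Submodule.mem_map_of_mem hu) hxT
  exact (Submodule.orthogonal_disjoint E).le_bot ⟨h_mem, h_orth⟩

theorem le_map_of_ker_adjoint_inf_eq_bot {T : H →L[𝕜] H} {E : Submodule 𝕜 H}
    (hTE_closed : IsClosed (E.map (T : H →ₗ[𝕜] H) : Set H))
    (hTE : E.map (T : H →ₗ[𝕜] H) ≤ E) (hT'E : E.map (adjoint T : H →ₗ[𝕜] H) ≤ E)
    (hker : LinearMap.ker (adjoint T : H →ₗ[𝕜] H) ⊓ E = ⊥) :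
    E ≤ E.map (T : H →ₗ[𝕜] H) := by
  have : CompleteSpace (E.map (T : H →ₗ[𝕜] H)) := hTE_closed.completeSpace_coe
  have h_compl : (E.map (T : H →ₗ[𝕜] H))ᗮ ⊓ E = ⊥ :=
    eq_bot_iff.mpr <| hker ▸ le_inf (orthogonal_map_inf_le_ker_adjoint hT'E) inf_le_right
  conv_lhs => rw [← Submodule.sup_orthogonal_inf_of_hasOrthogonalProjection hTE, h_compl,
    sup_bot_eq]

theorem ker_adjoint_inf_ne_bot {T : H →L[𝕜] H} {K : NNReal} (hT : AntilipschitzWith K T)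
    (hanalytic : ⨅ k : ℕ, LinearMap.range ((T ^ k : H →L[𝕜] H) : H →ₗ[𝕜] H) = ⊥)
    {E : Submodule 𝕜 H} (hE_closed : IsClosed (E : Set H)) (hE : E ≠ ⊥)
    (hTE : E.map (T : H →ₗ[𝕜] H) ≤ E) (hT'E : E.map (adjoint T : H →ₗ[𝕜] H) ≤ E) :
    LinearMap.ker (adjoint T : H →ₗ[𝕜] H) ⊓ E ≠ ⊥ := fun hker =>
  hE <| Submodule.eq_bot_of_le_map_of_iInf_range_pow_eq_bot
    (le_map_of_ker_adjoint_inf_eq_bot (isClosed_map_of_antilipschitz hT hE_closed) hTE hT'E hker)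
    (by simpa only [toLinearMap_pow] using hanalytic)

theorem biInf_ker_adjoint_ne_bot [Nontrivial H] {ι : Type*} [DecidableEq ι]
    (T : ι → H →L[𝕜] H) (hT : ∀ i, ∃ K, AntilipschitzWith K (T i))
    (hker : ∀ i j, i ≠ j → LinearMap.ker (adjoint (T i) : H →ₗ[𝕜] H) ≤
      (LinearMap.ker (adjoint (T i) : H →ₗ[𝕜] H)).comap (T j : H →ₗ[𝕜] H))
    (hadj : ∀ i j, adjoint (T i) ∘L adjoint (T j) = adjoint (T j) ∘L adjoint (T i))
    (hanalytic : ∀ i, ⨅ k : ℕ, LinearMap.range ((T i ^ k : H →L[𝕜] H) : H →ₗ[𝕜] H) = ⊥)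
    (S : Finset ι) : ⨅ i ∈ S, LinearMap.ker (adjoint (T i) : H →ₗ[𝕜] H) ≠ ⊥ := by
  induction S using Finset.induction_on with
  | empty => simp
  | insert j S hj ih =>
    set E := ⨅ i ∈ S, LinearMap.ker (adjoint (T i) : H →ₗ[𝕜] H)
    have hE_closed : IsClosed (E : Set H) := by
      simp only [E, Submodule.coe_iInf]
      exact isClosed_biInter fun i _ => isClosed_ker _
    have hTE : E.map (T j : H →ₗ[𝕜] H) ≤ E := by
      rw [Submodule.map_le_iff_le_comap]
      simp only [E, Submodule.comap_iInf]
      exact iInf₂_mono fun i hi => hker i j (ne_of_mem_of_not_mem hi hj)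
    have hT'E : E.map (adjoint (T j) : H →ₗ[𝕜] H) ≤ E := by
      rw [Submodule.map_le_iff_le_comap]
      simp only [E, Submodule.comap_iInf]
      exact iInf₂_mono fun i _ => ker_le_comap_ker_of_comp_comm (hadj i j)
    obtain ⟨K, hK⟩ := hT j
    rw [Finset.iInf_insert]
    exact ker_adjoint_inf_ne_bot hK (hanalytic j) hE_closed ih hTE hT'E

end HilbertSpace

theorem stmt_2_general {H : Type*} [NormedAddCommGroup H] [InnerProductSpace ℂ H] [CompleteSpace H]
    [Nontrivial H] {n : ℕ}
    (T L : Fin n → H →L[ℂ] H)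
    (hcomm : ∀ i j, T i ∘L T j = T j ∘L T i)
    (c : Fin n → ℝ) (hc : ∀ i, 0 < c i) (hbb : ∀ i (h : H), c i * ‖h‖ ≤ ‖T i h‖)
    (hLker : ∀ i, LinearMap.ker (L i : H →ₗ[ℂ] H) = LinearMap.ker (adjoint (T i) : H →ₗ[ℂ] H))
    (hLic : ∀ i j, i ≠ j → L i ∘L T j = T j ∘L L i)
    (hanalytic : ∀ i, (⨅ k : ℕ, LinearMap.range ((T i ^ k : H →L[ℂ] H) : H →ₗ[ℂ] H)) = ⊥) :
    (⨅ i, LinearMap.ker (adjoint (T i) : H →ₗ[ℂ] H)) ≠ ⊥ := by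
  have hker : ∀ i j, i ≠ j → LinearMap.ker (adjoint (T i) : H →ₗ[ℂ] H) ≤
      (LinearMap.ker (adjoint (T i) : H →ₗ[ℂ] H)).comap (T j : H →ₗ[ℂ] H) :=
    fun i j hij => hLker i ▸ ker_le_comap_ker_of_comp_comm (hLic i j hij)
  have hadj : ∀ i j, adjoint (T i) ∘L adjoint (T j) = adjoint (T j) ∘L adjoint (T i) :=
    fun i j => by rw [← adjoint_comp, ← adjoint_comp, hcomm]
  simpa using biInf_ker_adjoint_ne_bot T
    (fun i => ⟨_, antilipschitz_of_mul_norm_le (hc i) (hbb i)⟩) hker hadj hanalytic Finset.univ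

/-- For a left-inverse commuting tuple `(T₁,…,Tₙ)` of bounded left-invertible
analytic operators on a nonzero Hilbert space `H`, the joint kernel `⋂ᵢ ker Tᵢ*` is nonzero.
Here `L i` is the left inverse `(Tᵢ*Tᵢ)⁻¹Tᵢ*`, characterized as the left inverse of `Tᵢ`
with `ker (L i) = ker Tᵢ*`. -/
theorem stmt_2 {H : Type*} [NormedAddCommGroup H] [InnerProductSpace ℂ H] [CompleteSpace H]
    [Nontrivial H] {n : ℕ}
    (T L : Fin n → H →L[ℂ] H)
    (hcomm : ∀ i j, T i ∘L T j = T j ∘L T i)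
    (c : Fin n → ℝ) (hc : ∀ i, 0 < c i) (hbb : ∀ i (h : H), c i * ‖h‖ ≤ ‖T i h‖)
    (hLinv : ∀ i, L i ∘L T i = 1)
    (hLker : ∀ i, LinearMap.ker (L i : H →ₗ[ℂ] H) = LinearMap.ker (adjoint (T i) : H →ₗ[ℂ] H))
    (hLic : ∀ i j, i ≠ j → L i ∘L T j = T j ∘L L i)
    (hanalytic : ∀ i, (⨅ k : ℕ, LinearMap.range ((T i ^ k : H →L[ℂ] H) : H →ₗ[ℂ] H)) = ⊥) :
    (⨅ i, LinearMap.ker (adjoint (T i) : H →ₗ[ℂ] H)) ≠ ⊥ :=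
  stmt_2_general T L hcomm c hc hbb hLker hLic hanalytic
end

section
/- Let (T₁, …, Tₙ) be a left-inverse commuting tuple of bounded left-invertible operators on a Hilbert space H. If each Tᵢ has the wandering subspace property (H = closed span of {Tᵢᵏ(ker Tᵢ*) : k ≥ 0}), then the tuple has the joint wandering subspace property: H equals the closed span of {T₁^{k₁}⋯Tₙ^{kₙ} W : (k₁,…,kₙ) ∈ ℤ_{≥0}ⁿ}, where W = ⋂_{i=1}^n ker Tᵢ*. -/
/-!
For `i ∉ J`, the closed subspace `⋂_{j ∈ J} ker T_j*` is invariant under `T_i*` (the `T`'s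
commute) and under `T_i` (since `ker T_j* = ker L_j` and `L_j` commutes with `T_i`), so its
orthogonal projection commutes with `T_i`. Projecting the density of
`span_a T_iᵃ (ker T_i*)` onto it gives
`⋂_{j ∈ J} ker T_j* ⊆ closure (span_a T_iᵃ (⋂_{j ∈ J ∪ {i}} ker T_j*))`.
Chaining these inclusions along `J = ∅, {i₁}, {i₁, i₂}, …` puts `H` inside the closed span
of the `T^k W`.
-/

open ContinuousLinearMap Module.End

theorem List.prod_ofFn_update_mul {M : Type*} [Monoid M] {n : ℕ} (f : Fin n → M) (j : Fin n)
    (x : M) (hx : ∀ i, Commute x (f i)) :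
    (List.ofFn (Function.update f j (x * f j))).prod = x * (List.ofFn f).prod := by
  induction n with
  | zero => exact j.elim0
  | succ n ih =>
    rw [List.ofFn_succ, List.ofFn_succ, List.prod_cons, List.prod_cons]
    cases j using Fin.cases with
    | zero =>
      rw [Function.update_self, mul_assoc]
      simp
    | succ j =>
      have htail : (List.ofFn (Function.update (f ∘ Fin.succ) j (x * f j.succ))).prod =
          x * (List.ofFn (f ∘ Fin.succ)).prod := ih _ j fun i => hx i.succ
      rw [Function.update_of_ne (Fin.succ_ne_zero j).symm,
        ← Function.comp_def (Function.update f j.succ _) Fin.succ,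
        Function.update_comp_eq_of_injective _ (Fin.succ_injective n), htail, (hx 0).left_comm]
      rfl

def multiPow {M : Type*} [Monoid M] {n : ℕ} (T : Fin n → M) (k : Fin n → ℕ) : M :=
  (List.ofFn fun i => T i ^ k i).prod

theorem multiPow_update_add {M : Type*} [Monoid M] {n : ℕ} {T : Fin n → M}
    (hT : ∀ i j, Commute (T i) (T j)) (k : Fin n → ℕ) (j : Fin n) (a : ℕ) :
    multiPow T (Function.update k j (k j + a)) = T j ^ a * multiPow T k := by
  have hpow : (fun i => T i ^ Function.update k j (k j + a) i) =
      Function.update (fun i => T i ^ k i) j (T j ^ a * T j ^ k j) := by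
    ext i
    rcases eq_or_ne i j with rfl | hij
    · rw [Function.update_self, Function.update_self, add_comm, pow_add]
    · rw [Function.update_of_ne hij, Function.update_of_ne hij]
  rw [multiPow, hpow, List.prod_ofFn_update_mul _ j _ fun i => (hT j i).pow_pow a (k i)]
  rfl

theorem Module.End.iInf_mem_invtSubmodule {R M : Type*} {ι : Sort*} [Semiring R]
    [AddCommMonoid M] [Module R M] {f : Module.End R M} {p : ι → Submodule R M}
    (h : ∀ i, p i ∈ invtSubmodule f) : ⨅ i, p i ∈ invtSubmodule f := by
  simp only [mem_invtSubmodule_iff_forall_mem_of_mem, Submodule.mem_iInf] at h ⊢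
  exact fun x hx i => h i x (hx i)

theorem ContinuousLinearMap.ker_mem_invtSubmodule_of_commute {R M : Type*} [Semiring R]
    [TopologicalSpace M] [AddCommMonoid M] [Module R M] {A B : M →L[R] M} (h : Commute A B) :
    LinearMap.ker (B : M →ₗ[R] M) ∈ invtSubmodule (A : M →ₗ[R] M) := by
  rw [mem_invtSubmodule_iff_forall_mem_of_mem]
  intro x hx
  simp only [LinearMap.mem_ker, coe_coe] at hx ⊢
  rw [← comp_apply, ← mul_def, ← h.eq, mul_def, comp_apply, hx, map_zero]

section

variable {𝕜 E : Type*} [RCLike 𝕜] [NormedAddCommGroup E] [InnerProductSpace 𝕜 E]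
  [CompleteSpace E]

theorem Submodule.commute_starProjection {A : E →L[𝕜] E} (K : Submodule 𝕜 E)
    [K.HasOrthogonalProjection] (hA : K ∈ invtSubmodule (A : E →ₗ[𝕜] E))
    (hA' : K ∈ invtSubmodule (adjoint A : E →ₗ[𝕜] E)) :
    Commute K.starProjection A := by
  refine K.isIdempotentElem_starProjection.commute_iff.2 ⟨?_, ?_⟩
  · rw [Submodule.range_starProjection]
    exact hA
  · rw [Submodule.ker_starProjection]
    exact orthogonal_mem_invtSubmodule hA'

/-- Projecting onto `K` keeps `x` in place and, commuting with `A` and `A†`, moves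
`Aᵃ (ker A†)` into `Aᵃ (ker A† ⊓ K)`. -/
theorem mem_closure_iSup_map_pow_ker_adjoint_inf {A : E →L[𝕜] E} {K : Submodule 𝕜 E}
    [K.HasOrthogonalProjection] (hA : K ∈ invtSubmodule (A : E →ₗ[𝕜] E))
    (hA' : K ∈ invtSubmodule (adjoint A : E →ₗ[𝕜] E)) {x : E} (hxK : x ∈ K)
    (hx : x ∈ (⨆ a : ℕ, (LinearMap.ker (adjoint A : E →ₗ[𝕜] E)).map
      ((A ^ a : E →L[𝕜] E) : E →ₗ[𝕜] E)).topologicalClosure) :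
    x ∈ (⨆ a : ℕ, (LinearMap.ker (adjoint A : E →ₗ[𝕜] E) ⊓ K).map
      ((A ^ a : E →L[𝕜] E) : E →ₗ[𝕜] E)).topologicalClosure := by
  set Q := K.starProjection
  have hQA : Commute Q A := K.commute_starProjection hA hA'
  have hQA' : Commute Q (adjoint A) := K.commute_starProjection hA' (by rwa [adjoint_adjoint])
  have hmap : (⨆ a : ℕ, (LinearMap.ker (adjoint A : E →ₗ[𝕜] E)).map
      ((A ^ a : E →L[𝕜] E) : E →ₗ[𝕜] E)).map (Q : E →ₗ[𝕜] E) ≤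
      ⨆ a : ℕ, (LinearMap.ker (adjoint A : E →ₗ[𝕜] E) ⊓ K).map
        ((A ^ a : E →L[𝕜] E) : E →ₗ[𝕜] E) := by
    rw [Submodule.map_iSup]
    refine iSup_mono fun a => ?_
    rintro _ ⟨_, ⟨y, hy, rfl⟩, rfl⟩
    refine ⟨Q y, ⟨?_, K.starProjection_apply_mem y⟩, ?_⟩
    · rw [SetLike.mem_coe, LinearMap.mem_ker, coe_coe] at hy ⊢
      rw [← comp_apply, ← mul_def, ← hQA'.eq, mul_def, comp_apply, hy, map_zero]
    · simp only [coe_coe]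
      rw [← comp_apply, ← comp_apply, ← mul_def, ← mul_def, (hQA.pow_right a).eq]
  rw [← Submodule.starProjection_eq_self_iff.2 hxK]
  exact Submodule.topologicalClosure_mono hmap (Submodule.topologicalClosure_map Q _ ⟨x, hx, rfl⟩)

section

variable {ι : Type*} (T : ι → E →L[𝕜] E)

noncomputable def kerAdjointInf (s : Finset ι) : Submodule 𝕜 E :=
  ⨅ i ∈ s, LinearMap.ker (adjoint (T i) : E →ₗ[𝕜] E)

theorem isClosed_kerAdjointInf (s : Finset ι) : IsClosed (kerAdjointInf T s : Set E) := by
  simp only [kerAdjointInf, Submodule.coe_iInf]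
  exact isClosed_biInter fun i _ => (adjoint (T i)).isClosed_ker

theorem kerAdjointInf_mem_invtSubmodule {s : Finset ι} {A : E →L[𝕜] E}
    (h : ∀ i ∈ s, LinearMap.ker (adjoint (T i) : E →ₗ[𝕜] E) ∈ invtSubmodule (A : E →ₗ[𝕜] E)) :
    kerAdjointInf T s ∈ invtSubmodule (A : E →ₗ[𝕜] E) :=
  iInf_mem_invtSubmodule fun i => iInf_mem_invtSubmodule (h i)

theorem ker_adjoint_inf_kerAdjointInf_compl_insert [Fintype ι] [DecidableEq ι] {s : Finset ι}
    {i : ι} (hi : i ∉ s) :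
    LinearMap.ker (adjoint (T i) : E →ₗ[𝕜] E) ⊓ kerAdjointInf T (insert i s)ᶜ =
      kerAdjointInf T sᶜ := by
  rw [kerAdjointInf, kerAdjointInf, Finset.compl_insert]
  conv_rhs => rw [← Finset.insert_erase (Finset.mem_compl.2 hi)]
  rw [Finset.iInf_insert]

end

variable {n : ℕ} (T : Fin n → E →L[𝕜] E)

noncomputable def wanderingSpan (s : Finset (Fin n)) : Submodule 𝕜 E :=
  ⨆ (k : Fin n → ℕ) (_ : ∀ i ∉ s, k i = 0),
    (kerAdjointInf T Finset.univ).map ((multiPow T k : E →L[𝕜] E) : E →ₗ[𝕜] E)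

theorem map_pow_wanderingSpan_le (hT : ∀ i j, Commute (T i) (T j)) (s : Finset (Fin n))
    (i : Fin n) (a : ℕ) :
    (wanderingSpan T s).map ((T i ^ a : E →L[𝕜] E) : E →ₗ[𝕜] E) ≤
      wanderingSpan T (insert i s) := by
  simp only [wanderingSpan, Submodule.map_iSup]
  refine iSup₂_le fun k hk => le_iSup₂_of_le (Function.update k i (k i + a)) (fun j hj => ?_) ?_
  · rw [Finset.mem_insert, not_or] at hj
    rw [Function.update_of_ne hj.1, hk j hj.2]
  · rw [multiPow_update_add hT, mul_def, toLinearMap_comp, Submodule.map_comp]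

theorem kerAdjointInf_compl_le_closure_wanderingSpan (hT : ∀ i j, Commute (T i) (T j))
    (hinv : ∀ i j, i ≠ j →
      LinearMap.ker (adjoint (T j) : E →ₗ[𝕜] E) ∈ invtSubmodule (T i : E →ₗ[𝕜] E))
    (hdense : ∀ i, (⨆ a : ℕ, (LinearMap.ker (adjoint (T i) : E →ₗ[𝕜] E)).map
      ((T i ^ a : E →L[𝕜] E) : E →ₗ[𝕜] E)).topologicalClosure = ⊤)
    (s : Finset (Fin n)) : kerAdjointInf T sᶜ ≤ (wanderingSpan T s).topologicalClosure := by
  induction s using Finset.induction_on with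
  | empty =>
    rw [Finset.compl_empty]
    intro x hx
    refine Submodule.le_topologicalClosure _ (Submodule.mem_iSup_of_mem 0
      (Submodule.mem_iSup_of_mem (fun _ _ => rfl) (Submodule.mem_map.2 ⟨x, hx, ?_⟩)))
    simp [multiPow]
  | insert i s hi ih =>
    intro x hx
    have : CompleteSpace (kerAdjointInf T (insert i s)ᶜ) :=
      (isClosed_kerAdjointInf T _).completeSpace_coe
    have hK : kerAdjointInf T (insert i s)ᶜ ∈ invtSubmodule (T i : E →ₗ[𝕜] E) :=
      kerAdjointInf_mem_invtSubmodule T fun j hj =>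
        hinv i j (by rintro rfl; simp at hj)
    have hK' : kerAdjointInf T (insert i s)ᶜ ∈ invtSubmodule (adjoint (T i) : E →ₗ[𝕜] E) :=
      kerAdjointInf_mem_invtSubmodule T fun j _ => ker_mem_invtSubmodule_of_commute
        (by simpa only [star_eq_adjoint] using (hT i j).star_star)
    have hx' := mem_closure_iSup_map_pow_ker_adjoint_inf hK hK' hx (by rw [hdense i]; trivial)
    rw [ker_adjoint_inf_kerAdjointInf_compl_insert T hi] at hx'
    refine Submodule.topologicalClosure_minimal _ (iSup_le fun a => ?_)
      (Submodule.isClosed_topologicalClosure _) hx'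
    calc (kerAdjointInf T sᶜ).map ((T i ^ a : E →L[𝕜] E) : E →ₗ[𝕜] E)
        ≤ (wanderingSpan T s).topologicalClosure.map ((T i ^ a : E →L[𝕜] E) : E →ₗ[𝕜] E) :=
          Submodule.map_mono ih
      _ ≤ ((wanderingSpan T s).map ((T i ^ a : E →L[𝕜] E) : E →ₗ[𝕜] E)).topologicalClosure :=
          Submodule.topologicalClosure_map _ _
      _ ≤ (wanderingSpan T (insert i s)).topologicalClosure :=
          Submodule.topologicalClosure_mono (map_pow_wanderingSpan_le T hT s i a)

end

theorem stmt_3_general {H : Type*} [NormedAddCommGroup H] [InnerProductSpace ℂ H] [CompleteSpace H]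
    {n : ℕ}
    (T L : Fin n → H →L[ℂ] H)
    (hcomm : ∀ i j, T i ∘L T j = T j ∘L T i)
    (hLker : ∀ i, LinearMap.ker (L i : H →ₗ[ℂ] H) = LinearMap.ker (adjoint (T i) : H →ₗ[ℂ] H))
    (hLic : ∀ i j, i ≠ j → L i ∘L T j = T j ∘L L i)
    (hindiv : ∀ i,
      (⨆ k : ℕ, Submodule.map ((T i ^ k : H →L[ℂ] H) : H →ₗ[ℂ] H)
        (LinearMap.ker (adjoint (T i) : H →ₗ[ℂ] H))).topologicalClosure = ⊤) :
    (⨆ k : Fin n → ℕ, Submodule.map (((List.ofFn fun i => T i ^ k i).prod : H →L[ℂ] H) : H →ₗ[ℂ] H)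
      (⨅ i, LinearMap.ker (adjoint (T i) : H →ₗ[ℂ] H))).topologicalClosure = ⊤ := by
  have hinv : ∀ i j, i ≠ j →
      LinearMap.ker (adjoint (T j) : H →ₗ[ℂ] H) ∈ invtSubmodule (T i : H →ₗ[ℂ] H) :=
    fun i j hij => hLker j ▸ ker_mem_invtSubmodule_of_commute (hLic j i hij.symm).symm
  have hspan := kerAdjointInf_compl_le_closure_wanderingSpan T hcomm hinv hindiv Finset.univ
  have htop : kerAdjointInf T (Finset.univ : Finset (Fin n))ᶜ = ⊤ := by
    simp [kerAdjointInf]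
  have hW : wanderingSpan T Finset.univ = ⨆ k : Fin n → ℕ,
      Submodule.map (((List.ofFn fun i => T i ^ k i).prod : H →L[ℂ] H) : H →ₗ[ℂ] H)
        (⨅ i, LinearMap.ker (adjoint (T i) : H →ₗ[ℂ] H)) := by
    simp [wanderingSpan, kerAdjointInf, multiPow]
  rwa [htop, hW, top_le_iff] at hspan

/-- A left-inverse commuting tuple of bounded left-invertible operators
in which each `Tᵢ` has the (individual) wandering subspace property has the joint
wandering subspace property with wandering subspace `W = ⋂ᵢ ker Tᵢ*`. -/
theorem stmt_3 {H : Type*} [NormedAddCommGroup H] [InnerProductSpace ℂ H] [CompleteSpace H]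
    {n : ℕ}
    (T L : Fin n → H →L[ℂ] H)
    (hcomm : ∀ i j, T i ∘L T j = T j ∘L T i)
    (c : Fin n → ℝ) (hc : ∀ i, 0 < c i) (hbb : ∀ i (h : H), c i * ‖h‖ ≤ ‖T i h‖)
    (hLinv : ∀ i, L i ∘L T i = 1)
    (hLker : ∀ i, LinearMap.ker (L i : H →ₗ[ℂ] H) = LinearMap.ker (adjoint (T i) : H →ₗ[ℂ] H))
    (hLic : ∀ i j, i ≠ j → L i ∘L T j = T j ∘L L i)
    (hindiv : ∀ i,
      (⨆ k : ℕ, Submodule.map ((T i ^ k : H →L[ℂ] H) : H →ₗ[ℂ] H)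
        (LinearMap.ker (adjoint (T i) : H →ₗ[ℂ] H))).topologicalClosure = ⊤) :
    (⨆ k : Fin n → ℕ, Submodule.map (((List.ofFn fun i => T i ^ k i).prod : H →L[ℂ] H) : H →ₗ[ℂ] H)
      (⨅ i, LinearMap.ker (adjoint (T i) : H →ₗ[ℂ] H))).topologicalClosure = ⊤ :=
  stmt_3_general T L hcomm hLker hLic hindiv
end

section
/- Let (T₁, …, Tₙ) be a left-inverse commuting tuple of bounded left-invertible operators on a Hilbert space H with the joint wandering subspace property with wandering subspace W = ⋂ᵢ ker Tᵢ*. Then each Tⱼ individually has the wandering subspace property: H = closed span of {Tⱼᵏ(ker Tⱼ*) : k ≥ 0}. -/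
/-!
Fix `j` and let `S` be the span of the `Tⱼᵏ Wⱼ`, `Wⱼ = ker Tⱼ* = ker Lⱼ`. For `i ≠ j`, `Tᵢ`
commutes with `Lⱼ`, so it preserves `Wⱼ`, and since it commutes with `Tⱼ` it preserves `S`;
`Tⱼ` preserves `S` trivially. Hence `S` is invariant under every monomial `T₁^{k₁}⋯Tₙ^{kₙ}`, and
as it contains `W ⊆ Wⱼ`, it contains the joint wandering span, whose closure is `H`.
-/

open ContinuousLinearMap

namespace Module.End

variable {R M : Type*} [Semiring R] [AddCommMonoid M] [Module R M]

lemma ker_mem_invtSubmodule_of_commute {f g : End R M} (h : Commute f g) :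
    LinearMap.ker f ∈ g.invtSubmodule := fun x hx => by
  rw [Submodule.mem_comap, LinearMap.mem_ker, ← mul_apply, h.eq, mul_apply, LinearMap.mem_ker.1 hx,
    map_zero]

lemma iSup_map_pow_mem_invtSubmodule (f : End R M) (p : Submodule R M) :
    (⨆ k : ℕ, p.map (f ^ k)) ∈ f.invtSubmodule := by
  rw [mem_invtSubmodule_iff_map_le, Submodule.map_iSup]
  refine iSup_le fun k => ?_
  rw [← Submodule.map_comp, ← mul_eq_comp, ← pow_succ']
  exact le_iSup (fun k => p.map (f ^ k)) (k + 1)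

lemma iSup_map_pow_mem_invtSubmodule_of_commute {f g : End R M} (hfg : Commute f g)
    {p : Submodule R M} (hp : p ∈ g.invtSubmodule) :
    (⨆ k : ℕ, p.map (f ^ k)) ∈ g.invtSubmodule := by
  rw [mem_invtSubmodule_iff_map_le, Submodule.map_iSup]
  refine iSup_mono fun k => ?_
  rw [← Submodule.map_comp, ← mul_eq_comp, ← (hfg.pow_left k).eq, mul_eq_comp, Submodule.map_comp]
  exact Submodule.map_mono ((mem_invtSubmodule_iff_map_le g).1 hp)

def invtSubmoduleStabilizer (p : Submodule R M) : Submonoid (End R M) where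
  carrier := {f | p ∈ f.invtSubmodule}
  mul_mem' hf hg := invtSubmodule.comp _ hf hg
  one_mem' := by simp

lemma iSup_map_ofFn_prod_pow_le {n : ℕ} (f : Fin n → End R M) {p q : Submodule R M}
    (hpq : p ≤ q) (hq : ∀ i, q ∈ (f i).invtSubmodule) :
    ⨆ k : Fin n → ℕ, p.map (List.ofFn fun i => f i ^ k i).prod ≤ q := by
  refine iSup_le fun k => (Submodule.map_mono hpq).trans ?_
  refine (mem_invtSubmodule_iff_map_le _).1
    (Submonoid.list_prod_mem (s := invtSubmoduleStabilizer q) fun g hg => ?_)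
  obtain ⟨i, rfl⟩ := List.mem_ofFn.1 hg
  exact (invtSubmoduleStabilizer q).pow_mem (hq i) (k i)

end Module.End

open Module.End

theorem stmt_4_general {H : Type*} [NormedAddCommGroup H] [InnerProductSpace ℂ H] [CompleteSpace H]
    {n : ℕ}
    (T L : Fin n → H →L[ℂ] H)
    (hcomm : ∀ i j, T i ∘L T j = T j ∘L T i)
    (hLker : ∀ i, LinearMap.ker (L i : H →ₗ[ℂ] H) = LinearMap.ker (adjoint (T i) : H →ₗ[ℂ] H))
    (hLic : ∀ i j, i ≠ j → L i ∘L T j = T j ∘L L i)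
    (hjoint : (⨆ k : Fin n → ℕ, Submodule.map (((List.ofFn fun i => T i ^ k i).prod : H →L[ℂ] H) : H →ₗ[ℂ] H)
      (⨅ i, LinearMap.ker (adjoint (T i) : H →ₗ[ℂ] H))).topologicalClosure = ⊤) :
    ∀ j, (⨆ k : ℕ, Submodule.map ((T j ^ k : H →L[ℂ] H) : H →ₗ[ℂ] H)
      (LinearMap.ker (adjoint (T j) : H →ₗ[ℂ] H))).topologicalClosure = ⊤ := by
  intro j
  let A : Fin n → Module.End ℂ H := fun i => toLinearMapRingHom (T i)
  have hinv : ∀ i, (⨆ k : ℕ, (LinearMap.ker (adjoint (T j) : H →ₗ[ℂ] H)).map (A j ^ k)) ∈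
      (A i).invtSubmodule := by
    intro i
    rcases eq_or_ne i j with rfl | hij
    · exact iSup_map_pow_mem_invtSubmodule _ _
    refine iSup_map_pow_mem_invtSubmodule_of_commute
      ((show Commute (T j) (T i) from hcomm j i).map toLinearMapRingHom) ?_
    rw [← hLker]
    exact ker_mem_invtSubmodule_of_commute
      ((show Commute (L j) (T i) from hLic j i hij.symm).map toLinearMapRingHom)
  have hle := iSup_map_ofFn_prod_pow_le A
    ((iInf_le _ j).trans (le_iSup_of_le 0 (by rw [pow_zero, one_eq_id, Submodule.map_id]))) hinv
  have hprod (k : Fin n → ℕ) : (List.ofFn fun i => A i ^ k i).prod =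
      toLinearMapRingHom (List.ofFn fun i => T i ^ k i).prod := by
    simp only [A, map_list_prod, List.map_ofFn, Function.comp_def, map_pow]
  simp only [hprod] at hle
  simp only [A, ← map_pow] at hle
  rw [eq_top_iff, ← hjoint]
  exact Submodule.topologicalClosure_mono hle

/-- A left-inverse commuting tuple of bounded left-invertible operators with
the joint wandering subspace property (with wandering subspace `W = ⋂ᵢ ker Tᵢ*`) has the
individual wandering subspace property for each `Tⱼ`. -/
theorem stmt_4 {H : Type*} [NormedAddCommGroup H] [InnerProductSpace ℂ H] [CompleteSpace H]
    {n : ℕ}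
    (T L : Fin n → H →L[ℂ] H)
    (hcomm : ∀ i j, T i ∘L T j = T j ∘L T i)
    (c : Fin n → ℝ) (hc : ∀ i, 0 < c i) (hbb : ∀ i (h : H), c i * ‖h‖ ≤ ‖T i h‖)
    (hLinv : ∀ i, L i ∘L T i = 1)
    (hLker : ∀ i, LinearMap.ker (L i : H →ₗ[ℂ] H) = LinearMap.ker (adjoint (T i) : H →ₗ[ℂ] H))
    (hLic : ∀ i j, i ≠ j → L i ∘L T j = T j ∘L L i)
    (hjoint : (⨆ k : Fin n → ℕ, Submodule.map (((List.ofFn fun i => T i ^ k i).prod : H →L[ℂ] H) : H →ₗ[ℂ] H)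
      (⨅ i, LinearMap.ker (adjoint (T i) : H →ₗ[ℂ] H))).topologicalClosure = ⊤) :
    ∀ j, (⨆ k : ℕ, Submodule.map ((T j ^ k : H →L[ℂ] H) : H →ₗ[ℂ] H)
      (LinearMap.ker (adjoint (T j) : H →ₗ[ℂ] H))).topologicalClosure = ⊤ :=
  stmt_4_general T L hcomm hLker hLic hjoint
end

section
/- Let T₁, T₂ be commuting bounded operators on a Hilbert space H such that ker T₁* is a T₂-reducing subspace, and suppose T₂ restricted to ker T₁* is analytic (⋂_{k≥0} T₂ᵏ(ker T₁*) = {0}) and bounded below with ker T₁* ≠ {0}. Then ker T₁* ∩ ker T₂* ≠ {0}. -/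
/-!
Let `W = ker T₁*` and `M = T₂ W ⊆ W`. Since `T₂` is bounded below on the closed subspace `W`,
`M` is closed. If `M = W`, then `T₂ᵏ W = W` for every `k`, so analyticity forces `W = 0`.
Hence `M` is a proper closed subspace of `W`, and `W ⊖ M` contains some `z ≠ 0`. As `W` is
`T₂*`-invariant, `T₂ T₂* z ∈ M ⊥ z`, so `‖T₂* z‖² = ⟪z, T₂ T₂* z⟫ = 0`.
-/

open ContinuousLinearMap

namespace Submodule

theorem map_pow_eq_self {R M : Type*} [Semiring R] [AddCommMonoid M] [Module R M]
    {T : Module.End R M} {W : Submodule R M} (h : W.map T = W) (k : ℕ) :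
    W.map (T ^ k) = W := by
  induction k with
  | zero => rw [pow_zero, Module.End.one_eq_id, map_id]
  | succ k ih => rw [pow_succ', Module.End.mul_eq_comp, map_comp, ih, h]

theorem isClosed_map_of_bounded_below {𝕜 E F : Type*} [NontriviallyNormedField 𝕜]
    [NormedAddCommGroup E] [NormedSpace 𝕜 E] [CompleteSpace E]
    [NormedAddCommGroup F] [NormedSpace 𝕜 F]
    (T : E →L[𝕜] F) {W : Submodule 𝕜 E} (hW : IsClosed (W : Set E)) {c : ℝ} (hc : 0 < c)
    (hbb : ∀ x ∈ W, c * ‖x‖ ≤ ‖T x‖) :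
    IsClosed (W.map (T : E →ₗ[𝕜] F) : Set F) := by
  have := hW.completeSpace_coe
  obtain ⟨K, hK⟩ := (antilipschitzWith_iff_exists_mul_le_norm (f := T ∘L W.subtypeL)).mpr
    ⟨c, hc, fun x ↦ hbb x x.2⟩
  have hrange : Set.range (T ∘L W.subtypeL) = W.map (T : E →ₗ[𝕜] F) := by
    rw [map_coe, ← Subtype.range_coe (s := (W : Set E)), ← Set.range_comp]
    rfl
  rw [← hrange]
  exact hK.isClosed_range (T ∘L W.subtypeL).uniformContinuous

variable {𝕜 E : Type*} [RCLike 𝕜] [NormedAddCommGroup E] [InnerProductSpace 𝕜 E]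

theorem orthogonal_inf_ne_bot_of_lt {K₁ K₂ : Submodule 𝕜 E} (h : K₁ < K₂)
    [K₁.HasOrthogonalProjection] : K₁ᗮ ⊓ K₂ ≠ ⊥ := by
  intro hbot
  have hsup := sup_orthogonal_inf_of_hasOrthogonalProjection h.le
  rw [hbot, sup_bot_eq] at hsup
  exact h.ne hsup

theorem orthogonal_map_inf_le_ker_adjoint [CompleteSpace E] (T : E →L[𝕜] E)
    {W : Submodule 𝕜 E} (hW : ∀ x ∈ W, adjoint T x ∈ W) :
    (W.map (T : E →ₗ[𝕜] E))ᗮ ⊓ W ≤ LinearMap.ker (adjoint T : E →ₗ[𝕜] E) := by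
  rintro z ⟨hz_orth, hzW⟩
  have hTTz : T (adjoint T z) ∈ W.map (T : E →ₗ[𝕜] E) := ⟨adjoint T z, hW z hzW, rfl⟩
  have hinner : inner 𝕜 (adjoint T z) (adjoint T z) = 0 := by
    rw [adjoint_inner_left]
    exact (mem_orthogonal' _ z).mp hz_orth _ hTTz
  exact inner_self_eq_zero.mp hinner

end Submodule

theorem stmt_5_general {H : Type*} [NormedAddCommGroup H] [InnerProductSpace ℂ H] [CompleteSpace H]
    (T₁ T₂ : H →L[ℂ] H)
    (hred₁ : ∀ x ∈ LinearMap.ker (adjoint T₁ : H →ₗ[ℂ] H), T₂ x ∈ LinearMap.ker (adjoint T₁ : H →ₗ[ℂ] H))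
    (hred₂ : ∀ x ∈ LinearMap.ker (adjoint T₁ : H →ₗ[ℂ] H), adjoint T₂ x ∈ LinearMap.ker (adjoint T₁ : H →ₗ[ℂ] H))
    (hanalytic : (⨅ k : ℕ, Submodule.map ((T₂ ^ k : H →L[ℂ] H) : H →ₗ[ℂ] H) (LinearMap.ker (adjoint T₁ : H →ₗ[ℂ] H))) = ⊥)
    (c : ℝ) (hc : 0 < c)
    (hbb : ∀ x ∈ LinearMap.ker (adjoint T₁ : H →ₗ[ℂ] H), c * ‖x‖ ≤ ‖T₂ x‖)
    (hker : LinearMap.ker (adjoint T₁ : H →ₗ[ℂ] H) ≠ ⊥) :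
    LinearMap.ker (adjoint T₁ : H →ₗ[ℂ] H) ⊓ LinearMap.ker (adjoint T₂ : H →ₗ[ℂ] H) ≠ ⊥ := by
  set W := LinearMap.ker (adjoint T₁ : H →ₗ[ℂ] H)
  set M := W.map (T₂ : H →ₗ[ℂ] H)
  have hM_le : M ≤ W := Submodule.map_le_iff_le_comap.mpr hred₁
  have hM_ne : M ≠ W := fun h ↦ hker <| by
    simpa only [toLinearMap_pow, Submodule.map_pow_eq_self h, iInf_const] using hanalytic
  have : CompleteSpace M :=
    (Submodule.isClosed_map_of_bounded_below T₂ (isClosed_ker (adjoint T₁)) hc hbb).completeSpace_coe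
  refine ne_bot_of_le_ne_bot (Submodule.orthogonal_inf_ne_bot_of_lt (hM_le.lt_of_ne hM_ne)) ?_
  exact le_inf inf_le_right (Submodule.orthogonal_map_inf_le_ker_adjoint T₂ hred₂)

/-- If `T₁, T₂` commute, `ker T₁*` is `T₂`-reducing, `T₂|_{ker T₁*}` is
analytic and bounded below, and `ker T₁* ≠ {0}`, then `ker T₁* ∩ ker T₂* ≠ {0}`. -/
theorem stmt_5 {H : Type*} [NormedAddCommGroup H] [InnerProductSpace ℂ H] [CompleteSpace H]
    (T₁ T₂ : H →L[ℂ] H)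
    (hcomm : T₁ ∘L T₂ = T₂ ∘L T₁)
    (hred₁ : ∀ x ∈ LinearMap.ker (adjoint T₁ : H →ₗ[ℂ] H), T₂ x ∈ LinearMap.ker (adjoint T₁ : H →ₗ[ℂ] H))
    (hred₂ : ∀ x ∈ LinearMap.ker (adjoint T₁ : H →ₗ[ℂ] H), adjoint T₂ x ∈ LinearMap.ker (adjoint T₁ : H →ₗ[ℂ] H))
    (hanalytic : (⨅ k : ℕ, Submodule.map ((T₂ ^ k : H →L[ℂ] H) : H →ₗ[ℂ] H) (LinearMap.ker (adjoint T₁ : H →ₗ[ℂ] H))) = ⊥)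
    (c : ℝ) (hc : 0 < c)
    (hbb : ∀ x ∈ LinearMap.ker (adjoint T₁ : H →ₗ[ℂ] H), c * ‖x‖ ≤ ‖T₂ x‖)
    (hker : LinearMap.ker (adjoint T₁ : H →ₗ[ℂ] H) ≠ ⊥) :
    LinearMap.ker (adjoint T₁ : H →ₗ[ℂ] H) ⊓ LinearMap.ker (adjoint T₂ : H →ₗ[ℂ] H) ≠ ⊥ :=
  stmt_5_general T₁ T₂ hred₁ hred₂ hanalytic c hc hbb hker
end

section
/- Let (T₁,…,Tₙ) be a commuting tuple of weighted multishifts on H = ⊕_{α∈ℤ_{≥0}ⁿ} H_α with invertible bounded operator weights A^{(j)}_α (so Tⱼ(⊕ x_α) = ⊕ A^{(j)}_{α−εⱼ} x_{α−εⱼ}, where commutativity is equivalent to A^{(j)}_{α+εᵢ}A^{(i)}_α = A^{(i)}_{α+εⱼ}A^{(j)}_α for all α, i, j). Then the tuple is left-inverse commuting: LᵢTⱼ = TⱼLᵢ for all i ≠ j, where Lᵢ(⊕ x_α) = ⊕ (A^{(i)}_α)⁻¹ x_{α+εᵢ} is the left inverse of Tᵢ with ker Lᵢ = ker Tᵢ*.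 -/
/-!
Everything is computed coordinatewise on `ℓ²(ℕⁿ, H)`. At a multi-index `β + εⱼ` the compositions
`Lᵢ Tⱼ` and `Tⱼ Lᵢ` pick up the weights along the two sides of the square
`β → β + εᵢ, β + εⱼ → β + εᵢ + εⱼ`, so they agree by the commutativity of the weights; where
`αⱼ = 0` both vanish. Since `ker Tᵢ* = (range Tᵢ)ᗮ` and the weights are invertible, testing
against the vectors `single β v` shows that `ker Tᵢ*`, like `ker Lᵢ`, consists of the vectors
vanishing on `{α | 1 ≤ αᵢ}`.
-/

open ContinuousLinearMap

theorem Pi.eq_zero_or_exists_eq_add_single {ι : Type*} [DecidableEq ι] (α : ι → ℕ) (j : ι) :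
    α j = 0 ∨ ∃ β : ι → ℕ, α = β + Pi.single j 1 := by
  refine or_iff_not_imp_left.mpr fun hj => ⟨α - Pi.single j 1, funext fun k => ?_⟩
  rcases eq_or_ne k j with rfl | hk
  · simp only [Pi.add_apply, Pi.sub_apply, Pi.single_eq_same]
    omega
  · simp [hk]

section WeightedShift

variable {ι 𝕜 E : Type*} [DecidableEq ι]

local notation "ℓ²[" ι ", " E "]" => lp (fun _ : ι → ℕ => E) 2

section NormedSpace

variable [NormedField 𝕜] [NormedAddCommGroup E] [NormedSpace 𝕜 E]

def IsWeightedShift (j : ι) (A : (ι → ℕ) → E ≃L[𝕜] E) (T : ℓ²[ι, E] →L[𝕜] ℓ²[ι, E]) : Prop :=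
  ∀ x α, T x α = if 1 ≤ α j then A (α - Pi.single j 1) (x (α - Pi.single j 1)) else 0

def IsInvWeightedBackwardShift (j : ι) (A : (ι → ℕ) → E ≃L[𝕜] E)
    (L : ℓ²[ι, E] →L[𝕜] ℓ²[ι, E]) : Prop :=
  ∀ x α, L x α = (A α).symm (x (α + Pi.single j 1))

variable {i j : ι} {A B : (ι → ℕ) → E ≃L[𝕜] E} {T L : ℓ²[ι, E] →L[𝕜] ℓ²[ι, E]}

namespace IsWeightedShift

theorem apply_add_single (hT : IsWeightedShift j A T) (x : ℓ²[ι, E]) (β : ι → ℕ) :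
    T x (β + Pi.single j 1) = A β (x β) := by
  simp [hT x, add_tsub_cancel_right]

theorem apply_of_eq_zero (hT : IsWeightedShift j A T) (x : ℓ²[ι, E]) {α : ι → ℕ} (hα : α j = 0) :
    T x α = 0 := by
  simp [hT x, hα]

theorem apply_single [DecidableEq (ι → ℕ)] (hT : IsWeightedShift j A T) (β : ι → ℕ) (v : E) :
    T (lp.single 2 β v) = lp.single 2 (β + Pi.single j 1) (A β v) := by
  ext α
  rcases Pi.eq_zero_or_exists_eq_add_single α j with hα | ⟨γ, rfl⟩
  · have hne : α ≠ β + Pi.single j 1 := fun h => by simp [h] at hα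
    rw [hT.apply_of_eq_zero _ hα, lp.single_apply_ne _ _ _ hne]
  · rw [hT.apply_add_single]
    rcases eq_or_ne γ β with rfl | hne
    · simp only [lp.single_apply_self]
    · have hne' : γ + Pi.single j 1 ≠ β + Pi.single j 1 := fun h => hne (add_right_cancel h)
      rw [lp.single_apply_ne _ _ _ hne, lp.single_apply_ne _ _ _ hne', map_zero]

end IsWeightedShift

namespace IsInvWeightedBackwardShift

theorem apply_eq_zero_iff (hL : IsInvWeightedBackwardShift j A L) (x : ℓ²[ι, E]) :
    L x = 0 ↔ ∀ β : ι → ℕ, x (β + Pi.single j 1) = 0 := by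
  simp only [lp.ext_iff, funext_iff, hL x, lp.coeFn_zero, Pi.zero_apply,
    ContinuousLinearEquiv.map_eq_zero_iff]

theorem comp_eq_one (hL : IsInvWeightedBackwardShift j A L) (hT : IsWeightedShift j A T) :
    L ∘L T = 1 := by
  ext x α
  simp [hL _ α, hT.apply_add_single]

theorem comp_commute (hij : i ≠ j) (hL : IsInvWeightedBackwardShift i A L)
    (hT : IsWeightedShift j B T)
    (hAB : ∀ β v, B (β + Pi.single i 1) (A β v) = A (β + Pi.single j 1) (B β v)) :
    L ∘L T = T ∘L L := by
  ext x α
  simp only [comp_apply, hL _ α]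
  rcases Pi.eq_zero_or_exists_eq_add_single α j with hα | ⟨β, rfl⟩
  · have hαi : (α + Pi.single i 1 : ι → ℕ) j = 0 := by simp [hα, hij.symm]
    rw [hT.apply_of_eq_zero _ hαi, hT.apply_of_eq_zero _ hα, map_zero]
  · rw [add_right_comm, hT.apply_add_single, hT.apply_add_single, hL x β,
      ContinuousLinearEquiv.symm_apply_eq, ← hAB, ContinuousLinearEquiv.apply_symm_apply]

end IsInvWeightedBackwardShift

end NormedSpace

variable [RCLike 𝕜] [NormedAddCommGroup E] [InnerProductSpace 𝕜 E] [CompleteSpace E]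
  {j : ι} {A : (ι → ℕ) → E ≃L[𝕜] E} {T : ℓ²[ι, E] →L[𝕜] ℓ²[ι, E]}

theorem ContinuousLinearMap.adjoint_apply_eq_zero_iff {F G : Type*} [NormedAddCommGroup F]
    [InnerProductSpace 𝕜 F] [CompleteSpace F] [NormedAddCommGroup G] [InnerProductSpace 𝕜 G]
    [CompleteSpace G] (S : F →L[𝕜] G) (x : G) :
    adjoint S x = 0 ↔ ∀ y, inner 𝕜 (S y) x = 0 := by
  have := Submodule.mem_orthogonal (LinearMap.range (S : F →ₗ[𝕜] G)) x
  rw [orthogonal_range, LinearMap.mem_ker] at this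
  simpa using this

theorem IsWeightedShift.adjoint_apply_eq_zero_iff (hT : IsWeightedShift j A T) (x : ℓ²[ι, E]) :
    adjoint T x = 0 ↔ ∀ β : ι → ℕ, x (β + Pi.single j 1) = 0 := by
  classical
  rw [ContinuousLinearMap.adjoint_apply_eq_zero_iff]
  constructor
  · intro h β
    have hβ := h (lp.single 2 β ((A β).symm (x (β + Pi.single j 1))))
    rwa [hT.apply_single, lp.inner_single_left, ContinuousLinearEquiv.apply_symm_apply,
      inner_self_eq_zero] at hβ
  · intro h y
    rw [lp.inner_eq_tsum]
    refine (tsum_congr fun α => ?_).trans tsum_zero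
    rcases Pi.eq_zero_or_exists_eq_add_single α j with hα | ⟨β, rfl⟩
    · rw [hT.apply_of_eq_zero _ hα, inner_zero_left]
    · rw [h β, inner_zero_right]

end WeightedShift

/-- A commuting tuple of weighted multishifts on
`H = ⊕_{α ∈ ℤ_{≥0}ⁿ} H_α` (here realized as `lp` over the index set `Fin n → ℕ`) with
invertible bounded operator weights `A^{(j)}_α` is left-inverse commuting:
`Lᵢ Tⱼ = Tⱼ Lᵢ` for `i ≠ j`, where `Lᵢ(⊕ x_α) = ⊕ (A^{(i)}_α)⁻¹ x_{α+εᵢ}` is a left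
inverse of `Tᵢ` with `ker Lᵢ = ker Tᵢ*`. -/
theorem stmt_19 {G : Type*} [NormedAddCommGroup G] [InnerProductSpace ℂ G] [CompleteSpace G]
    {n : ℕ}
    (A : Fin n → (Fin n → ℕ) → (G ≃L[ℂ] G))
    (T L : Fin n → (lp (fun _ : Fin n → ℕ => G) 2 →L[ℂ] lp (fun _ : Fin n → ℕ => G) 2))
    (hT : ∀ (j : Fin n) (x : lp (fun _ : Fin n → ℕ => G) 2) (α : Fin n → ℕ),
      (T j x) α = if 1 ≤ α j then A j (α - Pi.single j 1) (x (α - Pi.single j 1)) else 0)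
    (hL : ∀ (i : Fin n) (x : lp (fun _ : Fin n → ℕ => G) 2) (α : Fin n → ℕ),
      (L i x) α = (A i α).symm (x (α + Pi.single i 1)))
    (hcommW : ∀ (i j : Fin n) (α : Fin n → ℕ) (v : G),
      A j (α + Pi.single i 1) (A i α v) = A i (α + Pi.single j 1) (A j α v)) :
    (∀ i j, i ≠ j → L i ∘L T j = T j ∘L L i) ∧
    (∀ i, L i ∘L T i = 1) ∧
    (∀ i, LinearMap.ker (L i).toLinearMap = LinearMap.ker (adjoint (T i)).toLinearMap) := by
  refine ⟨fun i j hij => IsInvWeightedBackwardShift.comp_commute hij (hL i) (hT j) (hcommW i j),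
    fun i => IsInvWeightedBackwardShift.comp_eq_one (hL i) (hT i), fun i => ?_⟩
  ext x
  simp only [LinearMap.mem_ker, coe_coe]
  rw [IsInvWeightedBackwardShift.apply_eq_zero_iff (hL i),
    IsWeightedShift.adjoint_apply_eq_zero_iff (hT i)]
end
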